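/- For all integers n ≥ 0 and g ≥ 2, the real number φ^n·(φ+2)^{g−1} + ψ^n·(ψ+2)^{g−1} is a nonnegative integer, where φ = (1+√5)/2 and ψ = (1−√5)/2. -/

import Mathlib

/-!
Since `φ + 2 = √5 φ` and `ψ + 2 = -√5 ψ`, the sum equals `√5 ^ m (φ ^ (n + m) + (-1) ^ m ψ ^ (n + m))`
with `m = g - 1`. For `m = 2j` this is `5 ^ j` times the Lucas number `L (n + m)`, and for
`m = 2j + 1` it is `5 ^ (j + 1)` times the Fibonacci number `F (n + m)` by Binet's formula.
-/

open Real
open scoped goldenRatio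

def lucas : ℕ → ℕ
  | 0 => 2
  | 1 => 1
  | n + 2 => lucas (n + 1) + lucas n

theorem coe_lucas_eq (n : ℕ) : (lucas n : ℝ) = φ ^ n + ψ ^ n := by
  induction n using Nat.twoStepInduction with
  | zero => norm_num [lucas]
  | one => simp [lucas, goldenRatio_add_goldenConj]
  | more n ih₀ ih₁ =>
    rw [lucas, Nat.cast_add, ih₁, ih₀]
    linear_combination -(φ ^ n * goldenRatio_sq + ψ ^ n * goldenConj_sq)

theorem goldenRatio_add_two : φ + 2 = √5 * φ := by
  linear_combination (-1 / 2 : ℝ) * Real.sq_sqrt (show (0 : ℝ) ≤ 5 by norm_num)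

theorem goldenConj_add_two : ψ + 2 = -√5 * ψ := by
  linear_combination (-1 / 2 : ℝ) * Real.sq_sqrt (show (0 : ℝ) ≤ 5 by norm_num)

theorem goldenRatio_pow_mul_add_two_pow_two_mul (n j : ℕ) :
    φ ^ n * (φ + 2) ^ (2 * j) + ψ ^ n * (ψ + 2) ^ (2 * j) = 5 ^ j * lucas (n + 2 * j) := by
  rw [goldenRatio_add_two, goldenConj_add_two, coe_lucas_eq, mul_pow, mul_pow,
    (even_two_mul j).neg_pow, pow_mul, Real.sq_sqrt (by norm_num)]
  ring

theorem goldenRatio_pow_mul_add_two_pow_two_mul_add_one (n j : ℕ) :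
    φ ^ n * (φ + 2) ^ (2 * j + 1) + ψ ^ n * (ψ + 2) ^ (2 * j + 1) =
      5 ^ (j + 1) * Nat.fib (n + 2 * j + 1) := by
  have h5 : √5 ^ 2 = 5 := Real.sq_sqrt (by norm_num)
  have hfib : √5 * Nat.fib (n + 2 * j + 1) = φ ^ (n + 2 * j + 1) - ψ ^ (n + 2 * j + 1) := by
    rw [coe_fib_eq, mul_div_cancel₀ _ (by positivity)]
  rw [goldenRatio_add_two, goldenConj_add_two, mul_pow, mul_pow,
    (odd_two_mul_add_one j).neg_pow, pow_succ √5, pow_mul, h5]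
  linear_combination -(5 ^ j * √5) * hfib + 5 ^ j * (Nat.fib (n + 2 * j + 1) : ℝ) * h5

theorem exists_nat_goldenRatio_pow_mul_add_two_pow (n m : ℕ) :
    ∃ k : ℕ, φ ^ n * (φ + 2) ^ m + ψ ^ n * (ψ + 2) ^ m = k := by
  obtain ⟨j, rfl | rfl⟩ := Nat.even_or_odd' m
  · exact ⟨_, by exact_mod_cast goldenRatio_pow_mul_add_two_pow_two_mul n j⟩
  · exact ⟨_, by exact_mod_cast goldenRatio_pow_mul_add_two_pow_two_mul_add_one n j⟩

theorem stmt_6_general (n g : ℕ) :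
    ∃ k : ℤ, 0 ≤ k ∧
      ((1 + Real.sqrt 5) / 2) ^ n * ((1 + Real.sqrt 5) / 2 + 2) ^ (g - 1) +
          ((1 - Real.sqrt 5) / 2) ^ n * ((1 - Real.sqrt 5) / 2 + 2) ^ (g - 1) = k := by
  obtain ⟨k, hk⟩ := exists_nat_goldenRatio_pow_mul_add_two_pow n (g - 1)
  exact ⟨k, k.cast_nonneg, mod_cast hk⟩

theorem stmt_6 (n g : ℕ) (hg : 2 ≤ g) :
    ∃ k : ℤ, 0 ≤ k ∧
      ((1 + Real.sqrt 5) / 2) ^ n * ((1 + Real.sqrt 5) / 2 + 2) ^ (g - 1) +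
          ((1 - Real.sqrt 5) / 2) ^ n * ((1 - Real.sqrt 5) / 2 + 2) ^ (g - 1) = k :=
  stmt_6_general n g
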